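/- arXiv:1202.2986 — 5 statements merged into one kernel-verified Lean document; each statement's English description precedes it below -/
import Mathlib

section
/- Let S be a finite nonempty set of positive integers whose greatest common divisor is 1, with Grundy sequence G. Then G(n) = n mod 2 for all n ∈ ℕ (i.e., the subtraction game S(S) is bipartite) if and only if 1 ∈ S and every element of S is odd. -/
/-- The minimum excludant: the least natural number not in `X`. -/
noncomputable def mex (X : Set ℕ) : ℕ := sInf {m | m ∉ X}

/-- `G` is the Grundy (nim-value) sequence of the subtraction game with
subtraction set `S`: `G n = mex { G (n - s) : s ∈ S, s ≤ n }`. -/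
def IsGrundy (S : Finset ℕ) (G : ℕ → ℕ) : Prop :=
  ∀ n, G n = mex {v | ∃ s ∈ S, s ≤ n ∧ v = G (n - s)}

theorem stmt_1 (S : Finset ℕ) (hS : S.Nonempty) (hpos : ∀ s ∈ S, 0 < s)
    (hgcd : S.gcd id = 1) (G : ℕ → ℕ) (hG : IsGrundy S G) :
    (∀ n, G n = n % 2) ↔ (1 ∈ S ∧ ∀ s ∈ S, Odd s) := by
  constructor
  · intro h
    constructor
    · -- 1 ∈ S
      have h1 := hG 1
      rw [h 1] at h1
      by_contra hn1
      have hX : (0:ℕ) ∈ {m | m ∉ {v | ∃ s ∈ S, s ≤ 1 ∧ v = G (1 - s)}} := by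
        rintro ⟨s, hs, hsle, _⟩
        have := hpos s hs
        have : s = 1 := by omega
        exact hn1 (this ▸ hs)
      have := Nat.sInf_le hX
      unfold mex at h1
      omega
    · intro s hs
      rw [Nat.odd_iff]
      by_contra hodd
      have hse : s % 2 = 0 := by omega
      have heq := hG s
      rw [h s, hse] at heq
      have h0X : (0:ℕ) ∈ {v | ∃ t ∈ S, t ≤ s ∧ v = G (s - t)} :=
        ⟨s, hs, le_refl s, by simp [h 0]⟩
      have h2X : (2:ℕ) ∈ {m | m ∉ {v | ∃ t ∈ S, t ≤ s ∧ v = G (s - t)}} := by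
        rintro ⟨t, ht, htle, hveq⟩
        rw [h (s - t)] at hveq
        omega
      have := Nat.sInf_mem (⟨2, h2X⟩ : Set.Nonempty _)
      unfold mex at heq
      rw [← heq] at this
      exact this h0X
  · rintro ⟨h1, hodd⟩ n
    induction n using Nat.strong_induction_on with
    | _ n ih =>
      rw [hG n]
      rcases Nat.eq_zero_or_pos n with rfl | hn
      · have hemp : {v | ∃ s ∈ S, s ≤ 0 ∧ v = G (0 - s)} = ∅ := by
          ext v
          simp only [Set.mem_setOf_eq, Set.mem_empty_iff_false, iff_false]
          rintro ⟨s, hs, hsle, _⟩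
          have := hpos s hs
          omega
        rw [hemp]
        unfold mex
        apply Nat.sInf_eq_zero.mpr
        left; simp
      · have hset : {v | ∃ s ∈ S, s ≤ n ∧ v = G (n - s)} = {(n+1) % 2} := by
          ext v
          simp only [Set.mem_setOf_eq, Set.mem_singleton_iff]
          constructor
          · rintro ⟨s, hs, hsle, rfl⟩
            rw [ih (n - s) (by have := hpos s hs; omega)]
            obtain ⟨k, hk⟩ := hodd s hs
            omega
          · intro hv
            refine ⟨1, h1, hn, ?_⟩
            rw [ih (n-1) (by omega), hv]
            omega
        rw [hset]
        unfold mex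
        rcases Nat.even_or_odd n with he | ho
        · have hne : n % 2 = 0 := Nat.even_iff.mp he
          have h2 : (n+1) % 2 = 1 := by omega
          rw [h2, hne]
          apply Nat.sInf_eq_zero.mpr
          left; simp
        · have hno : n % 2 = 1 := Nat.odd_iff.mp ho
          have h2 : (n+1) % 2 = 0 := by omega
          rw [h2, hno]
          exact le_antisymm (Nat.sInf_le (by simp))
            (le_csInf ⟨1, by simp⟩ (fun b hb => Nat.one_le_iff_ne_zero.mpr (by simpa using hb)))
end

section
/- Let a < b be coprime positive integers, and assume that if a = 1 then b is even. Let G be the Grundy sequence of the subtraction game S({a, b}), and let E = {c ≥ 1 : G(n + c) ≠ G(n) for all n ∈ ℕ}. If a + 1 < b ≤ 2a, then E = {s + m(a + b) : a ≤ s ≤ b, m ∈ ℕ}. If a = 1, or b = a + 1, or b > 2a, then E = {s + m(a + b) : s ∈ {a, b}, m ∈ ℕ} (the subtraction set is non-expandable). -/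
namespace SG

lemma mex_eq {X : Set ℕ} {k : ℕ} (h1 : k ∉ X) (h2 : ∀ j, j < k → j ∈ X) : mex X = k := by
  refine le_antisymm (Nat.sInf_le h1) ?_
  by_contra h
  push_neg at h
  exact Nat.sInf_mem (⟨k, h1⟩ : Set.Nonempty {m | m ∉ X}) (h2 _ h)

def fv (a b r : ℕ) : ℕ := if (r / a) % 2 = 1 then 1 else if r < b then 0 else 2

def gv (a b n : ℕ) : ℕ := fv a b (n % (a + b))

def Xset (a b n : ℕ) : Set ℕ :=
  {v | (a ≤ n ∧ v = gv a b (n - a)) ∨ (b ≤ n ∧ v = gv a b (n - b))}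

lemma mem_Xset {a b n v : ℕ} :
    v ∈ Xset a b n ↔ ((a ≤ n ∧ v = gv a b (n - a)) ∨ (b ≤ n ∧ v = gv a b (n - b))) := Iff.rfl

lemma fv_eq_zero {a b r : ℕ} (h1 : (r / a) % 2 = 0) (h2 : r < b) : fv a b r = 0 := by
  unfold fv; rw [if_neg (by omega), if_pos h2]

lemma fv_eq_one {a b r : ℕ} (h1 : (r / a) % 2 = 1) : fv a b r = 1 := by
  unfold fv; rw [if_pos h1]

lemma fv_eq_two {a b r : ℕ} (h1 : (r / a) % 2 = 0) (h2 : b ≤ r) : fv a b r = 2 := by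
  unfold fv; rw [if_neg (by omega), if_neg (by omega)]

section
variable {a b : ℕ} (ha : 0 < a) (hab : a < b)

omit ha hab in
lemma gv_def (n : ℕ) : gv a b n = fv a b (n % (a + b)) := rfl

include ha in
lemma div_sub (r : ℕ) (h : a ≤ r) : (r - a) / a + 1 = r / a := by
  rw [← Nat.add_div_right _ ha]; congr 1; omega

include hab in
lemma fv_of_lt_a (r : ℕ) (h : r < a) : fv a b r = 0 :=
  fv_eq_zero (by rw [Nat.div_eq_of_lt h]) (by omega)

omit ha hab in
lemma fv_of_ge_b (r : ℕ) (h : b ≤ r) : fv a b r = 1 ∨ fv a b r = 2 := by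
  unfold fv
  split
  · left; rfl
  · right; rw [if_neg (by omega)]

lemma sub_mod (p s n : ℕ) (hs : 0 < s) (hsp : s < p) (hn : s ≤ n) :
    (n - s) % p = if s ≤ n % p then n % p - s else n % p + (p - s) := by
  have hr : n % p < p := Nat.mod_lt _ (by omega)
  have h1 : (n - s) % p = (n - s + p) % p := (Nat.add_mod_right _ _).symm
  have h2 : n - s + p = n + (p - s) := by omega
  rw [h1, h2, Nat.add_mod, Nat.mod_eq_of_lt (show p - s < p by omega)]
  by_cases hc : s ≤ n % p
  · rw [if_pos hc]
    have : n % p + (p - s) = (n % p - s) + p := by omega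
    rw [this, Nat.add_mod_right, Nat.mod_eq_of_lt (by omega)]
  · rw [if_neg hc]
    exact Nat.mod_eq_of_lt (by omega)

include ha hab in
lemma gv_rec (n : ℕ) : gv a b n = mex (Xset a b n) := by
  have hp0 : 0 < a + b := by omega
  by_cases hnb : b ≤ n
  · -- both moves available
    have hna : a ≤ n := by omega
    set r := n % (a + b) with hrdef
    have hr : r < a + b := Nat.mod_lt _ hp0
    have ea : (n - a) % (a + b) = if a ≤ r then r - a else r + b := by
      rw [sub_mod (a + b) a n ha (by omega) hna]
      have : a + b - a = b := by omega
      rw [this]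
    have eb : (n - b) % (a + b) = if b ≤ r then r - b else r + a := by
      rw [sub_mod (a + b) b n (by omega) (by omega) hnb]
      have : a + b - b = a := by omega
      rw [this]
    rcases lt_or_ge r a with hra | hra
    · -- r < a : value 0, moves give fv (r+b) ∈ {1,2} and fv (r+a) = 1
      have v0 : gv a b n = 0 := by rw [gv_def, ← hrdef, fv_of_lt_a hab r hra]
      have v1 : gv a b (n - a) = fv a b (r + b) := by
        rw [gv_def, ea, if_neg (by omega)]
      have v2 : gv a b (n - b) = 1 := by
        rw [gv_def, eb, if_neg (by omega)]
        refine fv_eq_one ?_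
        rw [Nat.add_div_right _ ha, Nat.div_eq_of_lt hra]
      rw [v0]
      refine (mex_eq ?_ (by intro j hj; exact absurd hj (by omega))).symm
      rintro (⟨-, hv⟩ | ⟨-, hv⟩)
      · rcases fv_of_ge_b (a := a) (b := b) (r + b) (by omega) with h | h <;> rw [v1, h] at hv <;> omega
      · rw [v2] at hv; omega
    · rcases lt_or_ge r b with hrb | hrb
      · -- a ≤ r < b
        obtain ⟨k, hkdef⟩ : ∃ k, r / a = k := ⟨_, rfl⟩
        obtain ⟨j, hjdef⟩ : ∃ j, (r - a) / a = j := ⟨_, rfl⟩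
        have hsub : j + 1 = k := by rw [← hkdef, ← hjdef]; exact div_sub ha r hra
        have hk1 : 1 ≤ k := by omega
        have hadd : (r + a) / a = k + 1 := by rw [Nat.add_div_right _ ha, hkdef]
        have v0 : gv a b n = if k % 2 = 1 then 1 else 0 := by
          rw [gv_def, ← hrdef]
          rcases Nat.mod_two_eq_zero_or_one k with h | h
          · rw [if_neg (by omega), fv_eq_zero (by rw [hkdef]; omega) hrb]
          · rw [if_pos h, fv_eq_one (by rw [hkdef]; omega)]
        have v1 : gv a b (n - a) = if k % 2 = 1 then 0 else 1 := by
          rw [gv_def, ea, if_pos hra]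
          rcases Nat.mod_two_eq_zero_or_one k with h | h
          · rw [if_neg (by omega), fv_eq_one (by rw [hjdef]; omega)]
          · rw [if_pos h, fv_eq_zero (by rw [hjdef]; omega) (by omega)]
        rcases lt_or_ge (r + a) b with hcb | hcb
        · -- second move also lands in the alternating zone
          have v2 : gv a b (n - b) = if k % 2 = 1 then 0 else 1 := by
            rw [gv_def, eb, if_neg (by omega)]
            rcases Nat.mod_two_eq_zero_or_one k with h | h
            · rw [if_neg (by omega), fv_eq_one (by rw [hadd]; omega)]
            · rw [if_pos h, fv_eq_zero (by rw [hadd]; omega) hcb]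
          rw [v0]
          rcases Nat.mod_two_eq_zero_or_one k with h | h
          · rw [if_neg (by omega)]
            refine (mex_eq ?_ (by intro j hj; exact absurd hj (by omega))).symm
            rintro (⟨-, hv⟩ | ⟨-, hv⟩) <;> rw [if_neg (by omega)] at * <;> omega
          · rw [if_pos h]
            refine (mex_eq ?_ ?_).symm
            · rintro (⟨-, hv⟩ | ⟨-, hv⟩) <;> rw [if_pos h] at * <;> omega
            · intro j hj
              have : j = 0 := by omega
              subst this
              exact Or.inl ⟨hna, by rw [v1, if_pos h]⟩
        · -- second move lands in the tail
          have v2 : gv a b (n - b) = if k % 2 = 1 then 2 else 1 := by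
            rw [gv_def, eb, if_neg (by omega)]
            rcases Nat.mod_two_eq_zero_or_one k with h | h
            · rw [if_neg (by omega), fv_eq_one (by rw [hadd]; omega)]
            · rw [if_pos h, fv_eq_two (by rw [hadd]; omega) hcb]
          rw [v0]
          rcases Nat.mod_two_eq_zero_or_one k with h | h
          · rw [if_neg (by omega)]
            refine (mex_eq ?_ (by intro j hj; exact absurd hj (by omega))).symm
            rintro (⟨-, hv⟩ | ⟨-, hv⟩)
            · rw [v1, if_neg (by omega)] at hv; omega
            · rw [v2, if_neg (by omega)] at hv; omega
          · rw [if_pos h]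
            refine (mex_eq ?_ ?_).symm
            · rintro (⟨-, hv⟩ | ⟨-, hv⟩)
              · rw [v1, if_pos h] at hv; omega
              · rw [v2, if_pos h] at hv; omega
            · intro j hj
              have : j = 0 := by omega
              subst this
              exact Or.inl ⟨hna, by rw [v1, if_pos h]⟩
      · -- b ≤ r : tail region
        obtain ⟨k, hkdef⟩ : ∃ k, r / a = k := ⟨_, rfl⟩
        obtain ⟨j, hjdef⟩ : ∃ j, (r - a) / a = j := ⟨_, rfl⟩
        have hsub : j + 1 = k := by rw [← hkdef, ← hjdef]; exact div_sub ha r (by omega)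
        have hk1 : 1 ≤ k := by omega
        have v1 : gv a b (n - a) = if k % 2 = 1 then 0 else 1 := by
          rw [gv_def, ea, if_pos (by omega)]
          rcases Nat.mod_two_eq_zero_or_one k with h | h
          · rw [if_neg (by omega), fv_eq_one (by rw [hjdef]; omega)]
          · rw [if_pos h, fv_eq_zero (by rw [hjdef]; omega) (by omega)]
        have v2 : gv a b (n - b) = 0 := by
          rw [gv_def, eb, if_pos hrb]
          exact fv_of_lt_a hab _ (by omega)
        rcases Nat.mod_two_eq_zero_or_one k with h | h
        · have v0 : gv a b n = 2 := by
            rw [gv_def, ← hrdef]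
            exact fv_eq_two (by rw [hkdef]; omega) hrb
          rw [v0]
          refine (mex_eq ?_ ?_).symm
          · rintro (⟨-, hv⟩ | ⟨-, hv⟩)
            · rw [v1, if_neg (by omega)] at hv; omega
            · rw [v2] at hv; omega
          · intro j hj
            interval_cases j
            · exact Or.inr ⟨hnb, by rw [v2]⟩
            · exact Or.inl ⟨hna, by rw [v1, if_neg (by omega)]⟩
        · have v0 : gv a b n = 1 := by
            rw [gv_def, ← hrdef]
            exact fv_eq_one (by rw [hkdef]; omega)
          rw [v0]
          refine (mex_eq ?_ ?_).symm
          · rintro (⟨-, hv⟩ | ⟨-, hv⟩)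
            · rw [v1, if_pos h] at hv; omega
            · rw [v2] at hv; omega
          · intro j hj
            have : j = 0 := by omega
            subst this
            exact Or.inr ⟨hnb, by rw [v2]⟩
  · by_cases hna : a ≤ n
    · -- a ≤ n < b : only move by a
      have e1 : n % (a + b) = n := Nat.mod_eq_of_lt (by omega)
      have e2 : (n - a) % (a + b) = n - a := Nat.mod_eq_of_lt (by omega)
      obtain ⟨k, hkdef⟩ : ∃ k, n / a = k := ⟨_, rfl⟩
      obtain ⟨j, hjdef⟩ : ∃ j, (n - a) / a = j := ⟨_, rfl⟩
      have hsub : j + 1 = k := by rw [← hkdef, ← hjdef]; exact div_sub ha n hna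
      have hk1 : 1 ≤ k := by omega
      have v1 : gv a b (n - a) = if k % 2 = 1 then 0 else 1 := by
        rw [gv_def, e2]
        rcases Nat.mod_two_eq_zero_or_one k with h | h
        · rw [if_neg (by omega), fv_eq_one (by rw [hjdef]; omega)]
        · rw [if_pos h, fv_eq_zero (by rw [hjdef]; omega) (by omega)]
      rcases Nat.mod_two_eq_zero_or_one k with h | h
      · have v0 : gv a b n = 0 := by
          rw [gv_def, e1]
          exact fv_eq_zero (by rw [hkdef]; omega) (by omega)
        rw [v0]
        refine (mex_eq ?_ (by intro j hj; exact absurd hj (by omega))).symm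
        rintro (⟨-, hv⟩ | ⟨h', -⟩)
        · rw [v1, if_neg (by omega)] at hv; omega
        · omega
      · have v0 : gv a b n = 1 := by
          rw [gv_def, e1]
          exact fv_eq_one (by rw [hkdef]; omega)
        rw [v0]
        refine (mex_eq ?_ ?_).symm
        · rintro (⟨-, hv⟩ | ⟨h', -⟩)
          · rw [v1, if_pos h] at hv; omega
          · omega
        · intro j hj
          have : j = 0 := by omega
          subst this
          exact Or.inl ⟨hna, by rw [v1, if_pos h]⟩
    · -- n < a : no moves, value 0
      have v0 : gv a b n = 0 := by
        rw [gv_def, Nat.mod_eq_of_lt (by omega)]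
        exact fv_of_lt_a hab n (by omega)
      rw [v0]
      refine (mex_eq ?_ (by intro j hj; exact absurd hj (by omega))).symm
      rintro (⟨h', -⟩ | ⟨h', -⟩) <;> omega

omit ha hab in
lemma Xset_eq (n : ℕ) :
    {v | ∃ s ∈ ({a, b} : Finset ℕ), s ≤ n ∧ v = gv a b (n - s)} = Xset a b n := by
  ext v
  simp only [Finset.mem_insert, Finset.mem_singleton, Set.mem_setOf_eq, mem_Xset]
  constructor
  · rintro ⟨s, (rfl | rfl), h1, h2⟩
    · exact Or.inl ⟨h1, h2⟩
    · exact Or.inr ⟨h1, h2⟩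
  · rintro (⟨h1, h2⟩ | ⟨h1, h2⟩)
    · exact ⟨a, Or.inl rfl, h1, h2⟩
    · exact ⟨b, Or.inr rfl, h1, h2⟩

include ha hab in
lemma G_eq_gv (G : ℕ → ℕ) (hG : IsGrundy {a, b} G) : ∀ n, G n = gv a b n := by
  intro n
  induction n using Nat.strong_induction_on with
  | _ n ih =>
    rw [hG n, gv_rec ha hab n, ← Xset_eq]
    congr 1
    ext v
    simp only [Set.mem_setOf_eq]
    constructor
    · rintro ⟨s, hs, h1, rfl⟩
      have hs' : s = a ∨ s = b := by simpa using hs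
      exact ⟨s, hs, h1, ih (n - s) (by omega)⟩
    · rintro ⟨s, hs, h1, rfl⟩
      have hs' : s = a ∨ s = b := by simpa using hs
      exact ⟨s, hs, h1, (ih (n - s) (by omega)).symm⟩

include ha hab in
lemma shift_iff (c : ℕ) :
    (∀ n, gv a b (n + c) ≠ gv a b n) ↔
      (∀ r, r < a + b → fv a b ((r + c % (a + b)) % (a + b)) ≠ fv a b r) := by
  constructor
  · intro h r hr
    have h2 := h r
    rw [gv_def, gv_def, Nat.add_mod, Nat.mod_eq_of_lt hr] at h2
    exact h2
  · intro h n
    rw [gv_def, gv_def, Nat.add_mod]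
    exact h (n % (a + b)) (Nat.mod_lt _ (by omega))

include ha hab in
lemma S_a : ∀ r, r < a + b → fv a b ((r + a) % (a + b)) ≠ fv a b r := by
  intro r hr
  rcases lt_or_ge r b with h | h
  · have e : (r + a) % (a + b) = r + a := Nat.mod_eq_of_lt (by omega)
    rw [e]
    obtain ⟨k, hk⟩ : ∃ k, r / a = k := ⟨_, rfl⟩
    have hadd : (r + a) / a = k + 1 := by rw [Nat.add_div_right _ ha, hk]
    rcases Nat.mod_two_eq_zero_or_one k with h2 | h2
    · rw [fv_eq_one (by rw [hadd]; omega), fv_eq_zero (by rw [hk]; omega) h]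
      omega
    · rw [fv_eq_one (a := a) (b := b) (r := r) (by rw [hk]; omega)]
      rcases lt_or_ge (r + a) b with hb2 | hb2
      · rw [fv_eq_zero (by rw [hadd]; omega) hb2]; omega
      · rw [fv_eq_two (by rw [hadd]; omega) hb2]; omega
  · have e : (r + a) % (a + b) = r - b := by
      have h3 : r + a = (r - b) + (a + b) := by omega
      rw [h3, Nat.add_mod_right, Nat.mod_eq_of_lt (by omega)]
    rw [e, fv_of_lt_a hab _ (by omega)]
    rcases fv_of_ge_b (a := a) (b := b) r h with h1 | h1 <;> rw [h1] <;> omega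

include ha hab in
lemma S_b : ∀ r, r < a + b → fv a b ((r + b) % (a + b)) ≠ fv a b r := by
  intro r hr
  rcases lt_or_ge r a with h | h
  · have e : (r + b) % (a + b) = r + b := Nat.mod_eq_of_lt (by omega)
    rw [e, fv_of_lt_a hab r h]
    rcases fv_of_ge_b (a := a) (b := b) (r + b) (by omega) with h1 | h1 <;> rw [h1] <;> omega
  · have e : (r + b) % (a + b) = r - a := by
      have h3 : r + b = (r - a) + (a + b) := by omega
      rw [h3, Nat.add_mod_right, Nat.mod_eq_of_lt (by omega)]
    rw [e]
    obtain ⟨k, hk⟩ : ∃ k, r / a = k := ⟨_, rfl⟩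
    obtain ⟨j, hj⟩ : ∃ j, (r - a) / a = j := ⟨_, rfl⟩
    have hsub : j + 1 = k := by rw [← hk, ← hj]; exact div_sub ha r h
    rcases Nat.mod_two_eq_zero_or_one k with h2 | h2
    · rw [fv_eq_one (by rw [hj]; omega)]
      rcases lt_or_ge r b with hb2 | hb2
      · rw [fv_eq_zero (by rw [hk]; omega) hb2]; omega
      · rw [fv_eq_two (by rw [hk]; omega) hb2]; omega
    · rw [fv_eq_one (a := a) (b := b) (r := r) (by rw [hk]; omega),
        fv_eq_zero (by rw [hj]; omega) (by omega)]
      omega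

include ha hab in
lemma S_dlow (d : ℕ) (hd : d < a)
    (hS : ∀ r, r < a + b → fv a b ((r + d) % (a + b)) ≠ fv a b r) : False := by
  refine hS 0 (by omega) ?_
  rw [zero_add, Nat.mod_eq_of_lt (by omega), fv_of_lt_a hab d hd, fv_of_lt_a hab 0 (by omega)]

include ha hab in
lemma S_dhigh (d : ℕ) (hd1 : b < d) (hd2 : d < a + b)
    (hS : ∀ r, r < a + b → fv a b ((r + d) % (a + b)) ≠ fv a b r) : False := by
  refine hS (a + b - d) (by omega) ?_
  have e : a + b - d + d = a + b := by omega
  rw [e, Nat.mod_self, fv_of_lt_a hab 0 (by omega), fv_of_lt_a hab (a + b - d) (by omega)]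

include ha hab in
lemma fvA (hb2 : b ≤ 2 * a) (r : ℕ) (hr : r < a + b) :
    fv a b r = if r < a then 0 else if r < 2 * a then 1 else 2 := by
  rcases lt_or_ge r a with h | h
  · rw [if_pos h, fv_of_lt_a hab r h]
  · rcases lt_or_ge r (2 * a) with h2 | h2
    · rw [if_neg (by omega), if_pos h2]
      refine fv_eq_one ?_
      have hd : r / a = 1 := Nat.div_eq_of_lt_le (by omega) (by omega)
      rw [hd]
    · rw [if_neg (by omega), if_neg (by omega)]
      refine fv_eq_two ?_ (by omega)
      have hd : r / a = 2 := Nat.div_eq_of_lt_le (by omega) (by omega)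
      rw [hd]

include ha hab in
lemma SA_fwd (hb2 : b ≤ 2 * a) (d : ℕ) (hd1 : a ≤ d) (hd2 : d ≤ b) :
    ∀ r, r < a + b → fv a b ((r + d) % (a + b)) ≠ fv a b r := by
  intro r hr
  rcases lt_or_ge r a with h | h
  · have e : (r + d) % (a + b) = r + d := Nat.mod_eq_of_lt (by omega)
    rw [e, fv_of_lt_a hab r h, fvA ha hab hb2 (r + d) (by omega), if_neg (by omega)]
    rcases lt_or_ge (r + d) (2 * a) with h2 | h2
    · rw [if_pos h2]; omega
    · rw [if_neg (by omega)]; omega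
  · rcases lt_or_ge r (2 * a) with h2 | h2
    · have hv : fv a b r = 1 := by rw [fvA ha hab hb2 r hr, if_neg (by omega), if_pos h2]
      rcases lt_or_ge (r + d) (a + b) with h3 | h3
      · have e : (r + d) % (a + b) = r + d := Nat.mod_eq_of_lt h3
        rw [e, hv, fvA ha hab hb2 (r + d) (by omega), if_neg (by omega), if_neg (by omega)]
        omega
      · have e : (r + d) % (a + b) = r + d - (a + b) := by
          rw [Nat.mod_eq_sub_mod (by omega), Nat.mod_eq_of_lt (by omega)]
        rw [e, hv, fv_of_lt_a hab _ (by omega)]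
        omega
    · have hv : fv a b r = 2 := by rw [fvA ha hab hb2 r hr, if_neg (by omega), if_neg (by omega)]
      have e : (r + d) % (a + b) = r + d - (a + b) := by
        rw [Nat.mod_eq_sub_mod (by omega), Nat.mod_eq_of_lt (by omega)]
      rw [e, hv, fvA ha hab hb2 (r + d - (a + b)) (by omega)]
      rcases lt_or_ge (r + d - (a + b)) a with h5 | h5
      · rw [if_pos h5]; omega
      · rw [if_neg (by omega), if_pos (by omega)]; omega


include ha hab in
lemma SB_conv (hb2 : 2 * a < b) (hco : Nat.Coprime a b) (h1 : a = 1 → Even b) (d : ℕ)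
    (hd : d < a + b) (hda : d ≠ a) (hdb : d ≠ b)
    (hS : ∀ r, r < a + b → fv a b ((r + d) % (a + b)) ≠ fv a b r) : False := by
  obtain ⟨q, hq⟩ : ∃ q, b / a = q := ⟨_, rfl⟩
  obtain ⟨t, ht⟩ : ∃ t, b % a = t := ⟨_, rfl⟩
  have hbqt : a * q + t = b := by rw [← hq, ← ht]; exact Nat.div_add_mod b a
  have hta : t < a := by rw [← ht]; exact Nat.mod_lt _ ha
  have hq2 : 2 ≤ q := by
    by_contra h
    push_neg at h
    have h2 : a * q ≤ a * 1 := Nat.mul_le_mul_left a (by omega)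
    omega
  have ht0 : t = 0 → a = 1 := by
    intro h0
    have hdvd : a ∣ b := Nat.dvd_of_mod_eq_zero (by omega)
    have h2 : a ∣ Nat.gcd a b := Nat.dvd_gcd (dvd_refl a) hdvd
    rw [hco] at h2
    exact Nat.eq_one_of_dvd_one h2
  obtain ⟨k, hk⟩ : ∃ k, d / a = k := ⟨_, rfl⟩
  obtain ⟨u, hu⟩ : ∃ u, d % a = u := ⟨_, rfl⟩
  have hdku : a * k + u = d := by rw [← hk, ← hu]; exact Nat.div_add_mod d a
  have hua : u < a := by rw [← hu]; exact Nat.mod_lt _ ha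
  have hkq : k ≤ q + 1 := by
    by_contra h
    push_neg at h
    have h2 : a * (q + 2) ≤ a * k := Nat.mul_le_mul_left a h
    have h3 : a * (q + 2) = a * q + 2 * a := by ring
    omega
  rcases Nat.mod_two_eq_zero_or_one k with hk2 | hk2
  · -- k even
    rcases lt_trichotomy d b with hdb1 | hdb1 | hdb1
    · refine hS 0 (by omega) ?_
      rw [zero_add, Nat.mod_eq_of_lt hd, fv_of_lt_a hab 0 (by omega)]
      exact fv_eq_zero (by rw [hk]; omega) hdb1
    · exact hdb hdb1
    · refine hS (a + b - d) (by omega) ?_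
      rw [show a + b - d + d = a + b from by omega, Nat.mod_self,
        fv_of_lt_a hab 0 (by omega), fv_of_lt_a hab (a + b - d) (by omega)]
  · -- k odd
    by_cases hu0 : u = 0
    · -- d = a * k with k odd, k ≥ 3
      have hk3 : 3 ≤ k := by
        have hk1 : k ≠ 1 := by
          intro h
          subst h
          rw [mul_one] at hdku
          omega
        omega
      obtain ⟨j, hjk⟩ : ∃ j, j + k = q + 1 := ⟨q + 1 - k, by omega⟩
      rcases Nat.mod_two_eq_zero_or_one j with hj2 | hj2
      · -- j even : witness a*j + t
        have he1 : 1 ≤ a * j + t := by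
          by_contra h
          push_neg at h
          have ht0' : t = 0 := by omega
          have hj0 : j = 0 := by
            rcases Nat.mul_eq_zero.1 (show a * j = 0 by omega) with h' | h' <;> omega
          have ha1 : a = 1 := ht0 ht0'
          rw [ha1, one_mul] at hdku hbqt
          omega
        have hm1 : a * (j + 2) ≤ a * q := Nat.mul_le_mul_left a (by omega)
        have hm2 : a * (j + 2) = a * j + 2 * a := by ring
        have hjlt : a * j + t < b := by omega
        have hm3 : a * j + a * k = a * (q + 1) := by rw [← Nat.mul_add, hjk]
        have hm4 : a * (q + 1) = a * q + a := by ring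
        refine hS (a * j + t) (by omega) ?_
        rw [show a * j + t + d = a + b from by omega, Nat.mod_self,
          fv_of_lt_a hab 0 (by omega)]
        refine (fv_eq_zero ?_ hjlt).symm
        rw [Nat.mul_add_div ha, Nat.div_eq_of_lt hta]
        omega
      · -- j odd : t ≥ 1, witness a*(j+1)
        have ht1 : 1 ≤ t := by
          by_contra h
          push_neg at h
          have ht0' : t = 0 := by omega
          have ha1 : a = 1 := ht0 ht0'
          obtain ⟨m, hm⟩ := h1 ha1
          rw [ha1, one_mul] at hbqt
          omega
        have hm1 : a * (j + 3) ≤ a * (q + 1) := Nat.mul_le_mul_left a (by omega)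
        have hm2 : a * (j + 3) = a * (j + 1) + 2 * a := by ring
        have hm4 : a * (q + 1) = a * q + a := by ring
        have hxlt : a * (j + 1) < b := by omega
        have hx0 : fv a b (a * (j + 1)) = 0 :=
          fv_eq_zero (by rw [Nat.mul_div_cancel_left _ ha]; omega) hxlt
        have hm3 : a * (j + 1) + a * k = a * (q + 2) := by
          rw [← Nat.mul_add]
          congr 1
          omega
        have hm5 : a * (q + 2) = a * q + 2 * a := by ring
        refine hS (a * (j + 1)) (by omega) ?_
        rw [show a * (j + 1) + d = (a + b) + (a - t) from by omega, Nat.add_mod_left,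
          Nat.mod_eq_of_lt (by omega), fv_of_lt_a hab (a - t) (by omega), hx0]
    · -- u ≠ 0 : a ≥ 2 and t ≥ 1
      have ht1 : 1 ≤ t := by
        by_contra h
        push_neg at h
        have ha1 : a = 1 := ht0 (by omega)
        omega
      rcases lt_trichotomy k q with hkq1 | hkq1 | hkq1
      · -- k < q : witness a - u
        have hm1 : a * (k + 1) ≤ a * q := Nat.mul_le_mul_left a (by omega)
        have hm2 : a * (k + 1) = a * k + a := by ring
        refine hS (a - u) (by omega) ?_
        rw [show a - u + d = a * (k + 1) from by omega,
          Nat.mod_eq_of_lt (by omega), fv_of_lt_a hab (a - u) (by omega)]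
        exact fv_eq_zero (by rw [Nat.mul_div_cancel_left _ ha]; omega) (by omega)
      · -- k = q : compare u with t
        subst hkq1
        rcases lt_trichotomy u t with hut | hut | hut
        · -- u < t : witness 2a
          refine hS (2 * a) (by omega) ?_
          rw [show 2 * a + d = (a + b) + (a + u - t) from by omega, Nat.add_mod_left,
            Nat.mod_eq_of_lt (by omega), fv_of_lt_a hab (a + u - t) (by omega)]
          refine (fv_eq_zero ?_ (by omega)).symm
          rw [show 2 * a = a * 2 from by ring, Nat.mul_div_cancel_left _ ha]
        · exact hdb (by omega)
        · -- u > t : witness a + t - u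
          refine hS (a + t - u) (by omega) ?_
          rw [show a + t - u + d = a + b from by omega, Nat.mod_self,
            fv_of_lt_a hab 0 (by omega), fv_of_lt_a hab (a + t - u) (by omega)]
      · -- k = q + 1
        have hk1 : k = q + 1 := by omega
        subst hk1
        have hm1 : a * (q + 1) = a * q + a := by ring
        have hult : u < t := by omega
        refine hS (t - u) (by omega) ?_
        rw [show t - u + d = a + b from by omega, Nat.mod_self,
          fv_of_lt_a hab 0 (by omega), fv_of_lt_a hab (t - u) (by omega)]

end
end SG


theorem stmt_2 (a b : ℕ) (ha : 0 < a) (hab : a < b) (hco : Nat.Coprime a b)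
    (h1 : a = 1 → Even b) (G : ℕ → ℕ) (hG : IsGrundy {a, b} G) :
    (a + 1 < b → b ≤ 2 * a →
      {c : ℕ | 1 ≤ c ∧ ∀ n, G (n + c) ≠ G n} =
        {c : ℕ | ∃ s m : ℕ, a ≤ s ∧ s ≤ b ∧ c = s + m * (a + b)}) ∧
    ((a = 1 ∨ b = a + 1 ∨ 2 * a < b) →
      {c : ℕ | 1 ≤ c ∧ ∀ n, G (n + c) ≠ G n} =
        {c : ℕ | ∃ s m : ℕ, (s = a ∨ s = b) ∧ c = s + m * (a + b)}) := by
  have hgv : ∀ n, G n = SG.gv a b n := SG.G_eq_gv ha hab G hG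
  have hmodlt : ∀ c : ℕ, c % (a + b) < a + b := fun c => Nat.mod_lt _ (by omega)
  have hshift : ∀ c : ℕ, (∀ n, G (n + c) ≠ G n) ↔
      (∀ r, r < a + b → SG.fv a b ((r + c % (a + b)) % (a + b)) ≠ SG.fv a b r) := by
    intro c
    constructor
    · intro h
      refine (SG.shift_iff ha hab c).1 (fun n => ?_)
      rw [← hgv (n + c), ← hgv n]
      exact h n
    · intro h n
      rw [hgv (n + c), hgv n]
      exact (SG.shift_iff ha hab c).2 h n
  constructor
  · intro hb1 hb2
    ext c
    simp only [Set.mem_setOf_eq]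
    constructor
    · rintro ⟨hc1, hSc⟩
      have hS := (hshift c).1 hSc
      have hd1 : a ≤ c % (a + b) := by
        by_contra h
        push_neg at h
        exact SG.S_dlow ha hab _ h hS
      have hd2 : c % (a + b) ≤ b := by
        by_contra h
        push_neg at h
        exact SG.S_dhigh ha hab _ h (hmodlt c) hS
      exact ⟨c % (a + b), c / (a + b), hd1, hd2, (Nat.mod_add_div' c (a + b)).symm⟩
    · rintro ⟨s, m, hs1, hs2, rfl⟩
      have hmod : (s + m * (a + b)) % (a + b) = s := by
        rw [Nat.add_mul_mod_self_right, Nat.mod_eq_of_lt (by omega)]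
      refine ⟨le_trans (by omega : 1 ≤ s) (Nat.le_add_right _ _), ?_⟩
      refine (hshift _).2 ?_
      rw [hmod]
      exact SG.SA_fwd ha hab hb2 s hs1 hs2
  · intro hcase
    have hcase2 : b = a + 1 ∨ 2 * a < b := by
      rcases hcase with h | h | h
      · subst h; omega
      · exact Or.inl h
      · exact Or.inr h
    ext c
    simp only [Set.mem_setOf_eq]
    constructor
    · rintro ⟨hc1, hSc⟩
      have hS := (hshift c).1 hSc
      have hd : c % (a + b) = a ∨ c % (a + b) = b := by
        rcases hcase2 with hA | hB
        · have h1' : a ≤ c % (a + b) := by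
            by_contra h
            push_neg at h
            exact SG.S_dlow ha hab _ h hS
          have h2' : c % (a + b) ≤ b := by
            by_contra h
            push_neg at h
            exact SG.S_dhigh ha hab _ h (hmodlt c) hS
          omega
        · by_contra h
          push_neg at h
          exact SG.SB_conv ha hab hB hco h1 _ (hmodlt c) h.1 h.2 hS
      exact ⟨c % (a + b), c / (a + b), hd, (Nat.mod_add_div' c (a + b)).symm⟩
    · rintro ⟨s, m, hs, rfl⟩
      have hslt : s < a + b := by rcases hs with rfl | rfl <;> omega
      have hs1 : 1 ≤ s := by rcases hs with rfl | rfl <;> omega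
      have hmod : (s + m * (a + b)) % (a + b) = s := by
        rw [Nat.add_mul_mod_self_right, Nat.mod_eq_of_lt hslt]
      refine ⟨le_trans hs1 (Nat.le_add_right _ _), ?_⟩
      refine (hshift _).2 ?_
      rw [hmod]
      rcases hs with rfl | rfl
      · exact SG.S_a ha hab
      · exact SG.S_b ha hab
end

section
/- Let a be an odd positive integer and b an even positive integer with a < b, and let G be the Grundy sequence of S({1, a, b}). Then: (i) G(n + a + b) = G(n) for all n ∈ ℕ; (ii) for 0 ≤ n < a + b, G(n) = n mod 2 if n < b, and G(n) = 2 + (n − b) mod 2 if b ≤ n < a + b; and (iii) for every c ≥ 1, G(n + c) ≠ G(n) holds for all n if and only if c = s + m(a + b) for some m ∈ ℕ and some s which is either odd with 1 ≤ s ≤ a, or even with b ≤ s ≤ b + a − 1. -/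
namespace Stmt3Aux

def f (b x : ℕ) : ℕ := x % 2 + if x < b then 0 else 2

lemma f_lt {b x : ℕ} (h : x < b) : f b x = x % 2 := by simp [f, h]

lemma f_ge {b x : ℕ} (h : b ≤ x) : f b x = 2 + x % 2 := by
  simp [f, Nat.not_lt.mpr h]; omega

lemma f_mod2 (b x : ℕ) : f b x % 2 = x % 2 := by
  unfold f; split <;> omega

lemma mex_eq {X : Set ℕ} {k : ℕ} (h1 : k ∉ X) (h2 : ∀ j < k, j ∈ X) : mex X = k := by
  have hk : k ∈ {m | m ∉ X} := h1
  refine le_antisymm (Nat.sInf_le hk) ?_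
  by_contra h
  push_neg at h
  exact (Nat.sInf_mem (⟨k, hk⟩ : {m | m ∉ X}.Nonempty)) (h2 _ h)

lemma submod {L s n : ℕ} (hs1 : 1 ≤ s) (hsL : s < L) (hsn : s ≤ n) :
    (n - s) % L = if s ≤ n % L then n % L - s else n % L + L - s := by
  have hL : 0 < L := lt_of_le_of_lt (Nat.zero_le _) hsL
  obtain ⟨q, r, hr, hn⟩ : ∃ q r, r < L ∧ n = L * q + r :=
    ⟨n / L, n % L, Nat.mod_lt _ hL, (Nat.div_add_mod n L).symm⟩
  have hmod : n % L = r := by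
    rw [hn, Nat.mul_add_mod, Nat.mod_eq_of_lt hr]
  rcases le_or_gt s r with h | h
  · have he : n - s = L * q + (r - s) := by omega
    rw [hmod, if_pos h, he, Nat.mul_add_mod, Nat.mod_eq_of_lt (by omega)]
  · have hq : 1 ≤ q := by
      rcases Nat.eq_zero_or_pos q with rfl | hq
      · omega
      · exact hq
    have hLq : L ≤ L * q := Nat.le_mul_of_pos_right L hq
    have he : n - s = L * (q - 1) + (r + L - s) := by
      have : L * (q - 1) = L * q - L := by
        rcases q with _ | q
        · omega
        · simp [Nat.mul_succ]
      omega
    rw [hmod, if_neg (by omega), he, Nat.mul_add_mod, Nat.mod_eq_of_lt (by omega)]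

lemma mod2L {L x : ℕ} (hL : 0 < L) (h : x < 2 * L) :
    x % L = if x < L then x else x - L := by
  split_ifs with hx
  · exact Nat.mod_eq_of_lt hx
  · rw [Nat.mod_eq_sub_mod (by omega), Nat.mod_eq_of_lt (by omega)]

lemma grundy_eq {a b : ℕ} (ha : 0 < a) (ha2 : a % 2 = 1) (hb2 : b % 2 = 0)
    (hab : a < b) {G : ℕ → ℕ} (hG : IsGrundy {1, a, b} G) :
    ∀ n, G n = f b (n % (a + b)) := by
  intro n
  induction n using Nat.strong_induction_on with
  | _ n IH =>
  have hb0 : 0 < b := lt_trans ha hab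
  have hr : n % (a + b) < a + b := Nat.mod_lt _ (by omega)
  have hnr : n % (a + b) ≤ n := Nat.mod_le n (a + b)
  have hmem : ∀ v, (v ∈ {v | ∃ s ∈ ({1, a, b} : Finset ℕ), s ≤ n ∧ v = G (n - s)}) ↔
      ((1 ≤ n ∧ v = f b ((n - 1) % (a + b))) ∨ (a ≤ n ∧ v = f b ((n - a) % (a + b))) ∨
        (b ≤ n ∧ v = f b ((n - b) % (a + b)))) := by
    intro v
    simp only [Set.mem_setOf_eq, Finset.mem_insert, Finset.mem_singleton]
    constructor
    · rintro ⟨s, (rfl | rfl | rfl), hsn, rfl⟩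
      · exact Or.inl ⟨hsn, IH _ (by omega)⟩
      · exact Or.inr (Or.inl ⟨hsn, IH _ (by omega)⟩)
      · exact Or.inr (Or.inr ⟨hsn, IH _ (by omega)⟩)
    · rintro (⟨h1, rfl⟩ | ⟨h1, rfl⟩ | ⟨h1, rfl⟩)
      · exact ⟨1, Or.inl rfl, h1, (IH _ (by omega)).symm⟩
      · exact ⟨a, Or.inr (Or.inl rfl), h1, (IH _ (by omega)).symm⟩
      · exact ⟨b, Or.inr (Or.inr rfl), h1, (IH _ (by omega)).symm⟩
  have res1 : 1 ≤ n → (n - 1) % (a + b) =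
      if 1 ≤ n % (a + b) then n % (a + b) - 1 else n % (a + b) + (a + b) - 1 :=
    fun h => submod le_rfl (by omega) h
  have resa : a ≤ n → (n - a) % (a + b) =
      if a ≤ n % (a + b) then n % (a + b) - a else n % (a + b) + (a + b) - a :=
    fun h => submod ha (by omega) h
  have resb : b ≤ n → (n - b) % (a + b) =
      if b ≤ n % (a + b) then n % (a + b) - b else n % (a + b) + (a + b) - b :=
    fun h => submod hb0 (by omega) h
  rw [hG n]
  rcases Nat.lt_or_ge (n % (a + b)) b with hrb | hrb
  · rcases Nat.mod_two_eq_zero_or_one (n % (a + b)) with hp | hp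
    · -- case A: r even, r < b, value 0
      rw [f_lt hrb, hp]
      apply mex_eq
      · intro h0
        rcases (hmem 0).mp h0 with ⟨h1n, hv⟩ | ⟨h1n, hv⟩ | ⟨h1n, hv⟩
        · rw [res1 h1n] at hv
          split at hv
          · have := f_mod2 b (n % (a + b) - 1); omega
          · have := f_ge (b := b) (x := n % (a + b) + (a + b) - 1) (by omega); omega
        · rw [resa h1n] at hv
          split at hv
          · have := f_mod2 b (n % (a + b) - a); omega
          · have := f_ge (b := b) (x := n % (a + b) + (a + b) - a) (by omega); omega
        · rw [resb h1n, if_neg (by omega)] at hv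
          have := f_mod2 b (n % (a + b) + (a + b) - b); omega
      · intro j hj; omega
    · -- case B: r odd, r < b, value 1
      rw [f_lt hrb, hp]
      apply mex_eq
      · intro h0
        rcases (hmem 1).mp h0 with ⟨h1n, hv⟩ | ⟨h1n, hv⟩ | ⟨h1n, hv⟩
        · rw [res1 h1n, if_pos (by omega)] at hv
          have := f_mod2 b (n % (a + b) - 1); omega
        · rw [resa h1n] at hv
          split at hv
          · have := f_mod2 b (n % (a + b) - a); omega
          · have := f_ge (b := b) (x := n % (a + b) + (a + b) - a) (by omega); omega
        · rw [resb h1n, if_neg (by omega)] at hv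
          have := f_mod2 b (n % (a + b) + (a + b) - b); omega
      · intro j hj
        have hj0 : j = 0 := by omega
        subst hj0
        refine (hmem 0).mpr (Or.inl ⟨by omega, ?_⟩)
        rw [res1 (by omega), if_pos (by omega), f_lt (by omega)]
        omega
  · have hbn : b ≤ n := le_trans hrb hnr
    have han : a ≤ n := by omega
    have h1n : 1 ≤ n := by omega
    rcases Nat.mod_two_eq_zero_or_one (n % (a + b)) with hp | hp
    · -- case C: r even, r ≥ b, value 2
      rw [f_ge hrb, hp]
      apply mex_eq
      · intro h0
        rcases (hmem (2 + 0)).mp h0 with ⟨_, hv⟩ | ⟨_, hv⟩ | ⟨_, hv⟩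
        · rw [res1 h1n, if_pos (by omega)] at hv
          rcases Nat.lt_or_ge (n % (a + b) - 1) b with h | h
          · rw [f_lt h] at hv; omega
          · rw [f_ge h] at hv; omega
        · rw [resa han, if_pos (by omega), f_lt (by omega)] at hv
          omega
        · rw [resb hbn, if_pos (by omega), f_lt (by omega)] at hv
          omega
      · intro j hj
        interval_cases j
        · refine (hmem 0).mpr (Or.inr (Or.inr ⟨hbn, ?_⟩))
          rw [resb hbn, if_pos (by omega), f_lt (by omega)]
          omega
        · refine (hmem 1).mpr (Or.inr (Or.inl ⟨han, ?_⟩))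
          rw [resa han, if_pos (by omega), f_lt (by omega)]
          omega
    · -- case D: r odd, r ≥ b, value 3
      have hrb1 : b + 1 ≤ n % (a + b) := by omega
      rw [f_ge hrb, hp]
      apply mex_eq
      · intro h0
        rcases (hmem (2 + 1)).mp h0 with ⟨_, hv⟩ | ⟨_, hv⟩ | ⟨_, hv⟩
        · rw [res1 h1n, if_pos (by omega), f_ge (by omega)] at hv
          omega
        · rw [resa han, if_pos (by omega), f_lt (by omega)] at hv
          omega
        · rw [resb hbn, if_pos (by omega), f_lt (by omega)] at hv
          omega
      · intro j hj
        interval_cases j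
        · refine (hmem 0).mpr (Or.inr (Or.inl ⟨han, ?_⟩))
          rw [resa han, if_pos (by omega), f_lt (by omega)]
          omega
        · refine (hmem 1).mpr (Or.inr (Or.inr ⟨hbn, ?_⟩))
          rw [resb hbn, if_pos (by omega), f_lt (by omega)]
          omega
        · refine (hmem 2).mpr (Or.inl ⟨h1n, ?_⟩)
          rw [res1 h1n, if_pos (by omega), f_ge (by omega)]
          omega

end Stmt3Aux

theorem stmt_3 (a b : ℕ) (ha : 0 < a) (haodd : Odd a) (hbeven : Even b)
    (hab : a < b) (G : ℕ → ℕ) (hG : IsGrundy {1, a, b} G) :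
    (∀ n, G (n + (a + b)) = G n) ∧
    (∀ n < a + b,
      (n < b → G n = n % 2) ∧
      (b ≤ n → G n = 2 + (n - b) % 2)) ∧
    (∀ c, 1 ≤ c →
      ((∀ n, G (n + c) ≠ G n) ↔
        ∃ s m : ℕ, c = s + m * (a + b) ∧
          ((Odd s ∧ 1 ≤ s ∧ s ≤ a) ∨ (Even s ∧ b ≤ s ∧ s ≤ b + a - 1)))) := by
  have ha2 : a % 2 = 1 := Nat.odd_iff.mp haodd
  have hb2 : b % 2 = 0 := Nat.even_iff.mp hbeven
  have hb0 : 0 < b := lt_trans ha hab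
  have hL : 0 < a + b := by omega
  have hGe : ∀ n, G n = Stmt3Aux.f b (n % (a + b)) :=
    Stmt3Aux.grundy_eq ha ha2 hb2 hab hG
  refine ⟨?_, ?_, ?_⟩
  · intro n
    rw [hGe, hGe, Nat.add_mod_right]
  · intro n hn
    constructor
    · intro hnb
      rw [hGe, Nat.mod_eq_of_lt hn, Stmt3Aux.f_lt hnb]
    · intro hbn
      rw [hGe, Nat.mod_eq_of_lt hn, Stmt3Aux.f_ge hbn]
      omega
  · intro c hc
    constructor
    · intro hsafe
      refine ⟨c % (a + b), c / (a + b), (Nat.mod_add_div' c (a + b)).symm, ?_⟩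
      have hcd : c % (a + b) + c / (a + b) * (a + b) = c := Nat.mod_add_div' c (a + b)
      have hcr : c % (a + b) < a + b := Nat.mod_lt _ hL
      rcases Nat.mod_two_eq_zero_or_one (c % (a + b)) with hp | hp
      · -- even residue: show b ≤ r
        refine Or.inr ⟨Nat.even_iff.mpr hp, ?_, by omega⟩
        by_contra hcb
        push_neg at hcb
        have h0 := hsafe 0
        rw [zero_add, hGe, hGe, Nat.zero_mod, Stmt3Aux.f_lt hcb,
          Stmt3Aux.f_lt hb0] at h0
        omega
      · -- odd residue: show r ≤ a
        refine Or.inl ⟨Nat.odd_iff.mpr hp, by omega, ?_⟩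
        by_contra hca
        push_neg at hca
        have hca2 : a + 2 ≤ c % (a + b) := by omega
        have h0 := hsafe (a + b - c % (a + b))
        rw [hGe, hGe] at h0
        have he : a + b - c % (a + b) + c = a + b + c / (a + b) * (a + b) := by omega
        rw [he, Nat.add_mul_mod_self_right, Nat.mod_self,
          Nat.mod_eq_of_lt (by omega : a + b - c % (a + b) < a + b),
          Stmt3Aux.f_lt (by omega : a + b - c % (a + b) < b),
          Stmt3Aux.f_lt hb0] at h0
        omega
    · rintro ⟨s, m, rfl, hcond⟩ n
      rw [hGe, hGe, ← Nat.add_assoc, Nat.add_mul_mod_self_right, Nat.add_mod]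
      have hnn : n % (a + b) < a + b := Nat.mod_lt _ hL
      rcases hcond with ⟨hodd, hs1, hsa⟩ | ⟨heven, hsb, hsba⟩
      · have hs2 : s % 2 = 1 := Nat.odd_iff.mp hodd
        rw [Nat.mod_eq_of_lt (by omega : s < a + b)]
        rw [Stmt3Aux.mod2L hL (by omega)]
        split_ifs with hw
        · -- no wrap: parity differs
          have h1 := Stmt3Aux.f_mod2 b (n % (a + b) + s)
          have h2 := Stmt3Aux.f_mod2 b (n % (a + b))
          omega
        · -- wrap: regions differ
          rw [Stmt3Aux.f_lt (by omega : n % (a + b) + s - (a + b) < b),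
            Stmt3Aux.f_ge (by omega : b ≤ n % (a + b))]
          omega
      · have hs2 : s % 2 = 0 := Nat.even_iff.mp heven
        rw [Nat.mod_eq_of_lt (by omega : s < a + b)]
        rw [Stmt3Aux.mod2L hL (by omega)]
        split_ifs with hw
        · -- no wrap: regions differ
          rw [Stmt3Aux.f_ge (by omega : b ≤ n % (a + b) + s),
            Stmt3Aux.f_lt (by omega : n % (a + b) < b)]
          omega
        · -- wrap: parity differs
          have h1 := Stmt3Aux.f_mod2 b (n % (a + b) + s - (a + b))
          have h2 := Stmt3Aux.f_mod2 b (n % (a + b))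
          omega
end

section
/- Let a and r be even positive integers with r < a, and let G be the Grundy sequence of S({1, a, a + r}). Then: (i) G(n + 2a + r) = G(n) for all n ∈ ℕ; (ii) for 0 ≤ n < 2a + r: G(n) = n mod 2 if n < a; G(a) = 2; G(n) = (n − a − 1) mod 2 if a + 1 ≤ n ≤ 2a; G(n) = 2 + (n − 2a − 1) mod 2 if 2a + 1 ≤ n ≤ 2a + r − 2; and G(2a + r − 1) = 2; and (iii) for every c ≥ 1, G(n + c) ≠ G(n) holds for all n if and only if c = s + m(2a + r) for some m ∈ ℕ and some s ∈ {1} ∪ {a, a + 2, a + 4, …, a + r} ∪ {2a + r − 1}. -/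
set_option linter.unnecessarySeqFocus false

private lemma mex_eq' {X : Set ℕ} {k : ℕ} (h1 : k ∉ X) (h2 : ∀ j < k, j ∈ X) : mex X = k := by
  have hk : k ∈ {m | m ∉ X} := h1
  have hle : sInf {m | m ∉ X} ≤ k := Nat.sInf_le hk
  have hmem : sInf {m | m ∉ X} ∈ {m | m ∉ X} := Nat.sInf_mem ⟨k, hk⟩
  rcases Nat.lt_or_ge (sInf {m | m ∉ X}) k with h | h
  · exact absurd (h2 _ h) hmem
  · exact le_antisymm hle h

private lemma grundy_unique' {S : Finset ℕ} (hS : ∀ s ∈ S, 0 < s) {G H : ℕ → ℕ}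
    (hG : IsGrundy S G) (hH : IsGrundy S H) : ∀ n, G n = H n := by
  intro n
  induction n using Nat.strong_induction_on with
  | _ n ih =>
    have key : ∀ s ∈ S, s ≤ n → G (n - s) = H (n - s) := by
      intro s hs hsn
      exact ih _ (by have := hS s hs; omega)
    rw [hG n, hH n]
    congr 1
    ext v
    simp only [Set.mem_setOf_eq]
    constructor
    · rintro ⟨s, hs, hsn, rfl⟩; exact ⟨s, hs, hsn, key s hs hsn⟩
    · rintro ⟨s, hs, hsn, rfl⟩; exact ⟨s, hs, hsn, (key s hs hsn).symm⟩

private def ff (a r n : ℕ) : ℕ :=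
  if n < a then n % 2
  else if n = a then 2
  else if n ≤ 2*a then (n - a - 1) % 2
  else if n ≤ 2*a + r - 2 then 2 + (n - 2*a - 1) % 2
  else 2

private def FF (a r n : ℕ) : ℕ := ff a r (n % (2*a+r))

private lemma mod_sub_of_le {p s n : ℕ} (hp : 0 < p) (hs : s ≤ n % p) :
    (n - s) % p = n % p - s := by
  have h := Nat.mod_lt n hp
  conv_lhs => rw [← Nat.div_add_mod n p]
  rw [Nat.add_sub_assoc hs, Nat.mul_add_mod]
  exact Nat.mod_eq_of_lt (by omega)

section
variable (a r : ℕ) (ha : 0 < a) (hr : 0 < r) (ha2 : a % 2 = 0) (hr2 : r % 2 = 0) (hra : r < a)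

private lemma FF_period (n : ℕ) : FF a r (n + (2*a+r)) = FF a r n := by
  unfold FF; rw [Nat.add_mod_right]

private lemma FF_period_mul (m n : ℕ) : FF a r (n + m*(2*a+r)) = FF a r n := by
  induction m with
  | zero => simp
  | succ k ih =>
    have h : n + (k+1)*(2*a+r) = (n + k*(2*a+r)) + (2*a+r) := by ring
    rw [h, FF_period, ih]

include ha hr ha2 hr2 hra in
private lemma fsafe1 (u : ℕ) (hu : u < 2*a+r) : ff a r ((u+1) % (2*a+r)) ≠ ff a r u := by
  rcases eq_or_lt_of_le (Nat.succ_le_of_lt hu) with h | h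
  · rw [show u+1 = 2*a+r from h, Nat.mod_self]
    unfold ff; split_ifs <;> omega
  · rw [Nat.mod_eq_of_lt h]
    unfold ff; split_ifs <;> omega

include ha hr ha2 hr2 hra in
private lemma fsafeA (t : ℕ) (ht : t ≤ r) (ht2 : t % 2 = 0) (u : ℕ) (hu : u < 2*a+r) :
    ff a r ((u + (a + t)) % (2*a+r)) ≠ ff a r u := by
  rcases Nat.lt_or_ge (u + (a+t)) (2*a+r) with h | h
  · rw [Nat.mod_eq_of_lt h]
    unfold ff; split_ifs <;> omega
  · rw [Nat.mod_eq_sub_mod h, Nat.mod_eq_of_lt (by omega)]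
    unfold ff; split_ifs <;> omega

include ha hr ha2 hr2 hra in
private lemma fsafeP (u : ℕ) (hu : u < 2*a+r) :
    ff a r ((u + (2*a+r-1)) % (2*a+r)) ≠ ff a r u := by
  rcases Nat.eq_zero_or_pos u with rfl | hpos
  · rw [Nat.zero_add, Nat.mod_eq_of_lt (by omega)]
    unfold ff; split_ifs <;> omega
  · have hm : (u + (2*a+r-1)) % (2*a+r) = u - 1 := by
      rw [Nat.mod_eq_sub_mod (by omega), Nat.mod_eq_of_lt (by omega)]
      omega
    rw [hm]
    have h1 := fsafe1 a r ha hr ha2 hr2 hra (u-1) (by omega)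
    have h2 : u - 1 + 1 = u := by omega
    rw [h2, Nat.mod_eq_of_lt hu] at h1
    exact h1.symm

include ha hr ha2 hr2 hra in
private lemma fsafe (s : ℕ) (hs : s = 1 ∨ (∃ i, 2*i ≤ r ∧ s = a + 2*i) ∨ s = 2*a+r-1)
    (u : ℕ) (hu : u < 2*a+r) : ff a r ((u+s) % (2*a+r)) ≠ ff a r u := by
  rcases hs with rfl | ⟨i, hi, rfl⟩ | rfl
  · exact fsafe1 a r ha hr ha2 hr2 hra u hu
  · exact fsafeA a r ha hr ha2 hr2 hra (2*i) (by omega) (by omega) u hu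
  · exact fsafeP a r ha hr ha2 hr2 hra u hu

include ha hr ha2 hr2 hra in
private lemma FFsafe (s : ℕ) (hs : s = 1 ∨ (∃ i, 2*i ≤ r ∧ s = a + 2*i) ∨ s = 2*a+r-1)
    (m : ℕ) : FF a r (m + s) ≠ FF a r m := by
  unfold FF
  rw [← Nat.mod_add_mod]
  exact fsafe a r ha hr ha2 hr2 hra s hs (m % (2*a+r)) (Nat.mod_lt _ (by omega))

include ha hr ha2 hr2 hra in
private lemma funsafe (s : ℕ) (hs : s < 2*a+r)
    (h1 : s ≠ 1) (h2 : ∀ i, 2*i ≤ r → s ≠ a + 2*i) (h3 : s ≠ 2*a+r-1) :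
    ∃ u < 2*a+r, ff a r ((u + s) % (2*a+r)) = ff a r u := by
  by_cases hpar : s % 2 = 0
  · rcases Nat.lt_or_ge s a with hc | hc
    · refine ⟨0, by omega, ?_⟩
      rw [Nat.zero_add, Nat.mod_eq_of_lt hs]
      unfold ff; split_ifs <;> omega
    · rcases le_or_gt s (a + r) with hc2 | hc2
      · exact absurd (show s = a + 2*((s-a)/2) by omega) (h2 _ (by omega))
      · refine ⟨2*a+r-s, by omega, ?_⟩
        rw [show 2*a+r-s+s = 2*a+r by omega, Nat.mod_self]
        unfold ff; split_ifs <;> omega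
  · rcases Nat.lt_or_ge s a with hc | hc
    · refine ⟨a+1-s, by omega, ?_⟩
      rw [show a+1-s+s = a+1 by omega, Nat.mod_eq_of_lt (by omega)]
      unfold ff; split_ifs <;> omega
    · rcases Nat.lt_or_ge s (2*a) with hc2 | hc2
      · refine ⟨0, by omega, ?_⟩
        rw [Nat.zero_add, Nat.mod_eq_of_lt hs]
        unfold ff; split_ifs <;> omega
      · refine ⟨a+1, by omega, ?_⟩
        rw [Nat.mod_eq_sub_mod (by omega), Nat.mod_eq_of_lt (by omega)]
        unfold ff; split_ifs <;> omega

include ha hr ha2 hr2 hra in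
private lemma exists_pred (u j : ℕ) (hu : u < 2*a+r) (hj : j < ff a r u) :
    ∃ s, (s = 1 ∨ s = a ∨ s = a + r) ∧ s ≤ u ∧ ff a r (u - s) = j := by
  rcases Nat.lt_or_ge u a with hc | hc
  · have hfu : ff a r u = u % 2 := by unfold ff; split_ifs <;> omega
    exact ⟨1, Or.inl rfl, by omega, by unfold ff; split_ifs <;> omega⟩
  rcases eq_or_lt_of_le hc with heq | hc1
  · have hfu : ff a r u = 2 := by unfold ff; split_ifs <;> omega
    rcases (by omega : j = 0 ∨ j = 1) with rfl | rfl
    · exact ⟨a, Or.inr (Or.inl rfl), by omega, by unfold ff; split_ifs <;> omega⟩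
    · exact ⟨1, Or.inl rfl, by omega, by unfold ff; split_ifs <;> omega⟩
  rcases le_or_gt u (2*a) with hc2 | hc2
  · have hfu : ff a r u = (u - a - 1) % 2 := by unfold ff; split_ifs <;> omega
    exact ⟨1, Or.inl rfl, by omega, by unfold ff; split_ifs <;> omega⟩
  rcases Nat.lt_or_ge u (2*a+r-1) with hc3 | hc3
  · have hfu : ff a r u = 2 + (u - 2*a - 1) % 2 := by unfold ff; split_ifs <;> omega
    rcases (by omega : j = 0 ∨ j = 1 ∨ j = 2) with rfl | rfl | rfl
    · rcases (by omega : u % 2 = 1 ∨ u % 2 = 0) with hp | hp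
      · exact ⟨a, Or.inr (Or.inl rfl), by omega, by unfold ff; split_ifs <;> omega⟩
      · exact ⟨a+r, Or.inr (Or.inr rfl), by omega, by unfold ff; split_ifs <;> omega⟩
    · rcases (by omega : u % 2 = 1 ∨ u % 2 = 0) with hp | hp
      · exact ⟨a+r, Or.inr (Or.inr rfl), by omega, by unfold ff; split_ifs <;> omega⟩
      · exact ⟨a, Or.inr (Or.inl rfl), by omega, by unfold ff; split_ifs <;> omega⟩
    · exact ⟨1, Or.inl rfl, by omega, by unfold ff; split_ifs <;> omega⟩
  · have hu' : u = 2*a+r-1 := by omega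
    have hfu : ff a r u = 2 := by unfold ff; split_ifs <;> omega
    rcases (by omega : j = 0 ∨ j = 1) with rfl | rfl
    · exact ⟨a, Or.inr (Or.inl rfl), by omega, by unfold ff; split_ifs <;> omega⟩
    · exact ⟨a+r, Or.inr (Or.inr rfl), by omega, by unfold ff; split_ifs <;> omega⟩

include ha hr ha2 hr2 hra in
private lemma isGrundy_FF : IsGrundy {1, a, a+r} (FF a r) := by
  intro n
  have hp : (0:ℕ) < 2*a+r := by omega
  have hu : n % (2*a+r) < 2*a+r := Nat.mod_lt n hp
  refine (mex_eq' ?_ ?_).symm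
  · rintro ⟨s, hsS, hsn, hv⟩
    simp only [Finset.mem_insert, Finset.mem_singleton] at hsS
    have hsP : s = 1 ∨ (∃ i, 2*i ≤ r ∧ s = a + 2*i) ∨ s = 2*a+r-1 := by
      rcases hsS with rfl | rfl | rfl
      · exact Or.inl rfl
      · exact Or.inr (Or.inl ⟨0, by omega, by omega⟩)
      · exact Or.inr (Or.inl ⟨r/2, by omega, by omega⟩)
    have hne := FFsafe a r ha hr ha2 hr2 hra s hsP (n - s)
    rw [Nat.sub_add_cancel hsn] at hne
    exact hne hv
  · intro j hj
    unfold FF at hj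
    obtain ⟨s, hsP, hsu, hval⟩ := exists_pred a r ha hr ha2 hr2 hra (n % (2*a+r)) j hu hj
    refine ⟨s, ?_, le_trans hsu (Nat.mod_le n _), ?_⟩
    · simp only [Finset.mem_insert, Finset.mem_singleton]; tauto
    · show j = FF a r (n - s)
      unfold FF
      rw [mod_sub_of_le hp hsu]
      exact hval.symm
end

theorem stmt_4 (a r : ℕ) (ha : 0 < a) (hr : 0 < r) (haeven : Even a)
    (hreven : Even r) (hra : r < a) (G : ℕ → ℕ)
    (hG : IsGrundy {1, a, a + r} G) :
    (∀ n, G (n + (2 * a + r)) = G n) ∧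
    (∀ n < 2 * a + r,
      (n < a → G n = n % 2) ∧
      (n = a → G n = 2) ∧
      (a + 1 ≤ n → n ≤ 2 * a → G n = (n - a - 1) % 2) ∧
      (2 * a + 1 ≤ n → n ≤ 2 * a + r - 2 → G n = 2 + (n - 2 * a - 1) % 2) ∧
      (n = 2 * a + r - 1 → G n = 2)) ∧
    (∀ c, 1 ≤ c →
      ((∀ n, G (n + c) ≠ G n) ↔
        ∃ s m : ℕ, c = s + m * (2 * a + r) ∧
          (s = 1 ∨ (∃ i, 2 * i ≤ r ∧ s = a + 2 * i) ∨ s = 2 * a + r - 1))) := by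
  have ha2 : a % 2 = 0 := Nat.even_iff.mp haeven
  have hr2 : r % 2 = 0 := Nat.even_iff.mp hreven
  have hpos : ∀ s ∈ ({1, a, a+r} : Finset ℕ), 0 < s := by
    intro s hs
    simp only [Finset.mem_insert, Finset.mem_singleton] at hs
    rcases hs with rfl | rfl | rfl <;> omega
  have hGF : ∀ n, G n = FF a r n :=
    grundy_unique' hpos hG (isGrundy_FF a r ha hr ha2 hr2 hra)
  refine ⟨?_, ?_, ?_⟩
  · intro n
    rw [hGF, hGF, FF_period]
  · intro n hn
    have hGn : G n = ff a r n := by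
      rw [hGF]; unfold FF; rw [Nat.mod_eq_of_lt hn]
    refine ⟨fun h => ?_, fun h => ?_, fun h h' => ?_, fun h h' => ?_, fun h => ?_⟩ <;>
      (rw [hGn]; unfold ff; split_ifs <;> omega)
  · intro c hc
    constructor
    · intro hsafe
      by_contra hno
      push_neg at hno
      have hcp : c = c % (2*a+r) + (c / (2*a+r)) * (2*a+r) := (Nat.mod_add_div' c (2*a+r)).symm
      obtain ⟨h1, h2, h3⟩ := hno (c % (2*a+r)) (c / (2*a+r)) hcp
      obtain ⟨u, hult, hu⟩ := funsafe a r ha hr ha2 hr2 hra (c % (2*a+r))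
        (Nat.mod_lt _ (by omega)) h1 h2 h3
      apply hsafe u
      rw [hGF, hGF]
      unfold FF
      rw [Nat.mod_eq_of_lt hult, ← Nat.add_mod_mod]
      exact hu
    · rintro ⟨s, m, rfl, hsP⟩ n
      rw [hGF, hGF]
      have h : n + (s + m*(2*a+r)) = (n + s) + m*(2*a+r) := by ring
      rw [h, FF_period_mul]
      exact FFsafe a r ha hr ha2 hr2 hra s hsP n
end

section
/- Let a ≥ 4 be an even integer, and let G be the Grundy sequence of S({1, a, 3a}). Then: (i) G(n + 3a + 1) = G(n) for all n ∈ ℕ; (ii) for 0 ≤ n < 3a + 1: G(n) = n mod 2 if n < a; G(a) = 2; G(n) = (n − a − 1) mod 2 if a + 1 ≤ n ≤ 2a; G(2a + 1) = 2; G(n) = (n − 2a − 2) mod 2 if 2a + 2 ≤ n ≤ 3a − 1; and G(3a) = 2; and (iii) for every c ≥ 1, G(n + c) ≠ G(n) holds for all n if and only if c = s + m(3a + 1) for some m ∈ ℕ and s ∈ {1, a, 2a + 1, 3a}. -/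
lemma mex_eq'_s12 {X : Set ℕ} {x : ℕ} (hx : x ∉ X) (h : ∀ y < x, y ∈ X) : mex X = x := by
  have hne : {m | m ∉ X}.Nonempty := ⟨x, hx⟩
  have hm := Nat.sInf_mem hne
  have h1 : sInf {m | m ∉ X} ≤ x := Nat.sInf_le hx
  rcases lt_or_eq_of_le h1 with hlt | he
  · exact absurd (h _ hlt) hm
  · exact he

def gcore (a r : ℕ) : ℕ :=
  if r < a then r % 2
  else if r = a then 2
  else if r ≤ 2*a then (r - (a+1)) % 2
  else if r = 2*a+1 then 2
  else if r < 3*a then (r - (2*a+2)) % 2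
  else 2

lemma gcore_spec (a r : ℕ) (ha : 4 ≤ a) (h : r ≤ 3*a) :
    (r < a ∧ gcore a r = r % 2) ∨ (r = a ∧ gcore a r = 2) ∨
    (a+1 ≤ r ∧ r ≤ 2*a ∧ gcore a r = (r - (a+1)) % 2) ∨
    (r = 2*a+1 ∧ gcore a r = 2) ∨
    (2*a+2 ≤ r ∧ r < 3*a ∧ gcore a r = (r - (2*a+2)) % 2) ∨
    (r = 3*a ∧ gcore a r = 2) := by
  unfold gcore
  split_ifs <;> omega

lemma mod_cases' {P x : ℕ} (hx : x < 2*P) : (x < P ∧ x % P = x) ∨ (P ≤ x ∧ x % P = x - P) := by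
  rcases lt_or_ge x P with h|h
  · exact Or.inl ⟨h, Nat.mod_eq_of_lt h⟩
  · exact Or.inr ⟨h, by rw [Nat.mod_eq_sub_mod h]; exact Nat.mod_eq_of_lt (by omega)⟩

lemma gcore_step (a b r : ℕ) (ha : 4 ≤ a) (hb : a = b + b) (hr : r ≤ 3*a)
    (r1 r2 r3 : ℕ)
    (e1 : (r = 0 ∧ r1 = 3*a) ∨ (1 ≤ r ∧ r1 = r - 1))
    (e2 : (r < a ∧ r2 = r + 2*a+1) ∨ (a ≤ r ∧ r2 = r - a))
    (e3 : (r < 3*a ∧ r3 = r + 1) ∨ (r = 3*a ∧ r3 = 0)) :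
    (gcore a r ≠ gcore a r1 ∧ gcore a r ≠ gcore a r2 ∧ gcore a r ≠ gcore a r3) ∧
    (∀ y < gcore a r, ((1 ≤ r ∧ y = gcore a r1) ∨ (a ≤ r ∧ y = gcore a r2) ∨ (3*a ≤ r ∧ y = gcore a r3))) ∧
    (∀ y < gcore a r, (y = gcore a r1 ∨ y = gcore a r2 ∨ y = gcore a r3)) := by
  have hL : (r = 0) ∨ (1 ≤ r ∧ r ≤ a-2 ∧ r % 2 = 1) ∨ (2 ≤ r ∧ r ≤ a-2 ∧ r % 2 = 0) ∨ (r = a-1) ∨ (r = a) ∨ (r = a+1) ∨ (a+2 ≤ r ∧ r ≤ 2*a-1 ∧ (r-a) % 2 = 0) ∨ (a+2 ≤ r ∧ r ≤ 2*a-1 ∧ (r-a) % 2 = 1) ∨ (r = 2*a) ∨ (r = 2*a+1) ∨ (r = 2*a+2) ∨ (2*a+3 ≤ r ∧ r ≤ 3*a-2 ∧ r % 2 = 1) ∨ (2*a+3 ≤ r ∧ r ≤ 3*a-2 ∧ r % 2 = 0) ∨ (r = 3*a-1) ∨ (r = 3*a) := by omega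
  rcases hL with hL|hL|hL|hL|hL|hL|hL|hL|hL|hL|hL|hL|hL|hL|hL
  · have er1 : r1 = 3*a := by omega
    have er2 : r2 = 2*a+1 := by omega
    have er3 : r3 = 1 := by omega
    simp only [er1, er2, er3]
    have vx : gcore a r = 0 := by have := gcore_spec a r ha hr; omega
    have v1 : gcore a (3*a) = 2 := by have := gcore_spec a (3*a) ha (by omega); omega
    have v2 : gcore a (2*a+1) = 2 := by have := gcore_spec a (2*a+1) ha (by omega); omega
    have v3 : gcore a (1) = 1 := by have := gcore_spec a (1) ha (by omega); omega
    exact ⟨⟨by omega, by omega, by omega⟩, fun y hy => by omega, fun y hy => by omega⟩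
  · have er1 : r1 = r-1 := by omega
    have er2 : r2 = r+2*a+1 := by omega
    have er3 : r3 = r+1 := by omega
    simp only [er1, er2, er3]
    have vx : gcore a r = 1 := by have := gcore_spec a r ha hr; omega
    have v1 : gcore a (r-1) = 0 := by have := gcore_spec a (r-1) ha (by omega); omega
    have v2 : gcore a (r+2*a+1) = 0 := by have := gcore_spec a (r+2*a+1) ha (by omega); omega
    have v3 : gcore a (r+1) = 0 := by have := gcore_spec a (r+1) ha (by omega); omega
    exact ⟨⟨by omega, by omega, by omega⟩, fun y hy => by omega, fun y hy => by omega⟩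
  · have er1 : r1 = r-1 := by omega
    have er2 : r2 = r+2*a+1 := by omega
    have er3 : r3 = r+1 := by omega
    simp only [er1, er2, er3]
    have vx : gcore a r = 0 := by have := gcore_spec a r ha hr; omega
    have v1 : gcore a (r-1) = 1 := by have := gcore_spec a (r-1) ha (by omega); omega
    have v2 : gcore a (r+2*a+1) = 1 := by have := gcore_spec a (r+2*a+1) ha (by omega); omega
    have v3 : gcore a (r+1) = 1 := by have := gcore_spec a (r+1) ha (by omega); omega
    exact ⟨⟨by omega, by omega, by omega⟩, fun y hy => by omega, fun y hy => by omega⟩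
  · have er1 : r1 = a-2 := by omega
    have er2 : r2 = 3*a := by omega
    have er3 : r3 = a := by omega
    simp only [er1, er2, er3]
    have vx : gcore a r = 1 := by have := gcore_spec a r ha hr; omega
    have v1 : gcore a (a-2) = 0 := by have := gcore_spec a (a-2) ha (by omega); omega
    have v2 : gcore a (3*a) = 2 := by have := gcore_spec a (3*a) ha (by omega); omega
    have v3 : gcore a (a) = 2 := by have := gcore_spec a (a) ha (by omega); omega
    exact ⟨⟨by omega, by omega, by omega⟩, fun y hy => by omega, fun y hy => by omega⟩
  · have er1 : r1 = a-1 := by omega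
    have er2 : r2 = 0 := by omega
    have er3 : r3 = a+1 := by omega
    simp only [er1, er2, er3]
    have vx : gcore a r = 2 := by have := gcore_spec a r ha hr; omega
    have v1 : gcore a (a-1) = 1 := by have := gcore_spec a (a-1) ha (by omega); omega
    have v2 : gcore a (0) = 0 := by have := gcore_spec a (0) ha (by omega); omega
    have v3 : gcore a (a+1) = 0 := by have := gcore_spec a (a+1) ha (by omega); omega
    exact ⟨⟨by omega, by omega, by omega⟩, fun y hy => by omega, fun y hy => by omega⟩
  · have er1 : r1 = a := by omega
    have er2 : r2 = 1 := by omega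
    have er3 : r3 = a+2 := by omega
    simp only [er1, er2, er3]
    have vx : gcore a r = 0 := by have := gcore_spec a r ha hr; omega
    have v1 : gcore a (a) = 2 := by have := gcore_spec a (a) ha (by omega); omega
    have v2 : gcore a (1) = 1 := by have := gcore_spec a (1) ha (by omega); omega
    have v3 : gcore a (a+2) = 1 := by have := gcore_spec a (a+2) ha (by omega); omega
    exact ⟨⟨by omega, by omega, by omega⟩, fun y hy => by omega, fun y hy => by omega⟩
  · have er1 : r1 = r-1 := by omega
    have er2 : r2 = r-a := by omega
    have er3 : r3 = r+1 := by omega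
    simp only [er1, er2, er3]
    have vx : gcore a r = 1 := by have := gcore_spec a r ha hr; omega
    have v1 : gcore a (r-1) = 0 := by have := gcore_spec a (r-1) ha (by omega); omega
    have v2 : gcore a (r-a) = 0 := by have := gcore_spec a (r-a) ha (by omega); omega
    have v3 : gcore a (r+1) = 0 := by have := gcore_spec a (r+1) ha (by omega); omega
    exact ⟨⟨by omega, by omega, by omega⟩, fun y hy => by omega, fun y hy => by omega⟩
  · have er1 : r1 = r-1 := by omega
    have er2 : r2 = r-a := by omega
    have er3 : r3 = r+1 := by omega
    simp only [er1, er2, er3]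
    have vx : gcore a r = 0 := by have := gcore_spec a r ha hr; omega
    have v1 : gcore a (r-1) = 1 := by have := gcore_spec a (r-1) ha (by omega); omega
    have v2 : gcore a (r-a) = 1 := by have := gcore_spec a (r-a) ha (by omega); omega
    have v3 : gcore a (r+1) = 1 := by have := gcore_spec a (r+1) ha (by omega); omega
    exact ⟨⟨by omega, by omega, by omega⟩, fun y hy => by omega, fun y hy => by omega⟩
  · have er1 : r1 = 2*a-1 := by omega
    have er2 : r2 = a := by omega
    have er3 : r3 = 2*a+1 := by omega
    simp only [er1, er2, er3]
    have vx : gcore a r = 1 := by have := gcore_spec a r ha hr; omega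
    have v1 : gcore a (2*a-1) = 0 := by have := gcore_spec a (2*a-1) ha (by omega); omega
    have v2 : gcore a (a) = 2 := by have := gcore_spec a (a) ha (by omega); omega
    have v3 : gcore a (2*a+1) = 2 := by have := gcore_spec a (2*a+1) ha (by omega); omega
    exact ⟨⟨by omega, by omega, by omega⟩, fun y hy => by omega, fun y hy => by omega⟩
  · have er1 : r1 = 2*a := by omega
    have er2 : r2 = a+1 := by omega
    have er3 : r3 = 2*a+2 := by omega
    simp only [er1, er2, er3]
    have vx : gcore a r = 2 := by have := gcore_spec a r ha hr; omega
    have v1 : gcore a (2*a) = 1 := by have := gcore_spec a (2*a) ha (by omega); omega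
    have v2 : gcore a (a+1) = 0 := by have := gcore_spec a (a+1) ha (by omega); omega
    have v3 : gcore a (2*a+2) = 0 := by have := gcore_spec a (2*a+2) ha (by omega); omega
    exact ⟨⟨by omega, by omega, by omega⟩, fun y hy => by omega, fun y hy => by omega⟩
  · have er1 : r1 = 2*a+1 := by omega
    have er2 : r2 = a+2 := by omega
    have er3 : r3 = 2*a+3 := by omega
    simp only [er1, er2, er3]
    have vx : gcore a r = 0 := by have := gcore_spec a r ha hr; omega
    have v1 : gcore a (2*a+1) = 2 := by have := gcore_spec a (2*a+1) ha (by omega); omega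
    have v2 : gcore a (a+2) = 1 := by have := gcore_spec a (a+2) ha (by omega); omega
    have v3 : gcore a (2*a+3) = 1 := by have := gcore_spec a (2*a+3) ha (by omega); omega
    exact ⟨⟨by omega, by omega, by omega⟩, fun y hy => by omega, fun y hy => by omega⟩
  · have er1 : r1 = r-1 := by omega
    have er2 : r2 = r-a := by omega
    have er3 : r3 = r+1 := by omega
    simp only [er1, er2, er3]
    have vx : gcore a r = 1 := by have := gcore_spec a r ha hr; omega
    have v1 : gcore a (r-1) = 0 := by have := gcore_spec a (r-1) ha (by omega); omega
    have v2 : gcore a (r-a) = 0 := by have := gcore_spec a (r-a) ha (by omega); omega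
    have v3 : gcore a (r+1) = 0 := by have := gcore_spec a (r+1) ha (by omega); omega
    exact ⟨⟨by omega, by omega, by omega⟩, fun y hy => by omega, fun y hy => by omega⟩
  · have er1 : r1 = r-1 := by omega
    have er2 : r2 = r-a := by omega
    have er3 : r3 = r+1 := by omega
    simp only [er1, er2, er3]
    have vx : gcore a r = 0 := by have := gcore_spec a r ha hr; omega
    have v1 : gcore a (r-1) = 1 := by have := gcore_spec a (r-1) ha (by omega); omega
    have v2 : gcore a (r-a) = 1 := by have := gcore_spec a (r-a) ha (by omega); omega
    have v3 : gcore a (r+1) = 1 := by have := gcore_spec a (r+1) ha (by omega); omega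
    exact ⟨⟨by omega, by omega, by omega⟩, fun y hy => by omega, fun y hy => by omega⟩
  · have er1 : r1 = 3*a-2 := by omega
    have er2 : r2 = 2*a-1 := by omega
    have er3 : r3 = 3*a := by omega
    simp only [er1, er2, er3]
    have vx : gcore a r = 1 := by have := gcore_spec a r ha hr; omega
    have v1 : gcore a (3*a-2) = 0 := by have := gcore_spec a (3*a-2) ha (by omega); omega
    have v2 : gcore a (2*a-1) = 0 := by have := gcore_spec a (2*a-1) ha (by omega); omega
    have v3 : gcore a (3*a) = 2 := by have := gcore_spec a (3*a) ha (by omega); omega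
    exact ⟨⟨by omega, by omega, by omega⟩, fun y hy => by omega, fun y hy => by omega⟩
  · have er1 : r1 = 3*a-1 := by omega
    have er2 : r2 = 2*a := by omega
    have er3 : r3 = 0 := by omega
    simp only [er1, er2, er3]
    have vx : gcore a r = 2 := by have := gcore_spec a r ha hr; omega
    have v1 : gcore a (3*a-1) = 1 := by have := gcore_spec a (3*a-1) ha (by omega); omega
    have v2 : gcore a (2*a) = 1 := by have := gcore_spec a (2*a) ha (by omega); omega
    have v3 : gcore a (0) = 0 := by have := gcore_spec a (0) ha (by omega); omega
    exact ⟨⟨by omega, by omega, by omega⟩, fun y hy => by omega, fun y hy => by omega⟩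

theorem stmt_12 (a : ℕ) (ha : 4 ≤ a) (haeven : Even a) (G : ℕ → ℕ)
    (hG : IsGrundy {1, a, 3 * a} G) :
    (∀ n, G (n + (3 * a + 1)) = G n) ∧
    (∀ n < 3 * a + 1,
      (n < a → G n = n % 2) ∧
      (n = a → G n = 2) ∧
      (a + 1 ≤ n → n ≤ 2 * a → G n = (n - a - 1) % 2) ∧
      (n = 2 * a + 1 → G n = 2) ∧
      (2 * a + 2 ≤ n → n ≤ 3 * a - 1 → G n = (n - 2 * a - 2) % 2) ∧
      (n = 3 * a → G n = 2)) ∧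
    (∀ c, 1 ≤ c →
      ((∀ n, G (n + c) ≠ G n) ↔
        ∃ s m : ℕ, c = s + m * (3 * a + 1) ∧
          (s = 1 ∨ s = a ∨ s = 2 * a + 1 ∨ s = 3 * a))) := by
  obtain ⟨b, hb⟩ := haeven
  have hP : 0 < 3*a+1 := by omega
  have echar : ∀ r, r ≤ 3*a →
      ((r = 0 ∧ (r+3*a) % (3*a+1) = 3*a) ∨ (1 ≤ r ∧ (r+3*a) % (3*a+1) = r - 1)) ∧
      ((r < a ∧ (r+(2*a+1)) % (3*a+1) = r + 2*a+1) ∨ (a ≤ r ∧ (r+(2*a+1)) % (3*a+1) = r - a)) ∧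
      ((r < 3*a ∧ (r+1) % (3*a+1) = r + 1) ∨ (r = 3*a ∧ (r+1) % (3*a+1) = 0)) := by
    intro r hr
    have c1 := mod_cases' (show r+3*a < 2*(3*a+1) by omega)
    have c2 := mod_cases' (show r+(2*a+1) < 2*(3*a+1) by omega)
    have c3 := mod_cases' (show r+1 < 2*(3*a+1) by omega)
    exact ⟨by omega, by omega, by omega⟩
  have key : ∀ n, G n = gcore a (n % (3*a+1)) := by
    intro n
    induction n using Nat.strong_induction_on with
    | _ n IH =>
      have hr : n % (3*a+1) ≤ 3*a := by
        have := Nat.mod_lt n hP; omega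
      have h1 : 1 ≤ n → G (n-1) = gcore a ((n % (3*a+1) + 3*a) % (3*a+1)) := by
        intro h
        rw [IH (n-1) (by omega)]
        congr 1
        calc (n-1) % (3*a+1) = (n-1+(3*a+1)) % (3*a+1) := (Nat.add_mod_right _ _).symm
          _ = (n + 3*a) % (3*a+1) := by congr 1; omega
          _ = (n % (3*a+1) + 3*a % (3*a+1)) % (3*a+1) := Nat.add_mod _ _ _
          _ = (n % (3*a+1) + 3*a) % (3*a+1) := by
                rw [Nat.mod_eq_of_lt (show 3*a < 3*a+1 by omega)]
      have h2 : a ≤ n → G (n-a) = gcore a ((n % (3*a+1) + (2*a+1)) % (3*a+1)) := by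
        intro h
        rw [IH (n-a) (by omega)]
        congr 1
        calc (n-a) % (3*a+1) = (n-a+(3*a+1)) % (3*a+1) := (Nat.add_mod_right _ _).symm
          _ = (n + (2*a+1)) % (3*a+1) := by congr 1; omega
          _ = (n % (3*a+1) + (2*a+1) % (3*a+1)) % (3*a+1) := Nat.add_mod _ _ _
          _ = (n % (3*a+1) + (2*a+1)) % (3*a+1) := by
                rw [Nat.mod_eq_of_lt (show 2*a+1 < 3*a+1 by omega)]
      have h3 : 3*a ≤ n → G (n-3*a) = gcore a ((n % (3*a+1) + 1) % (3*a+1)) := by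
        intro h
        rw [IH (n-3*a) (by omega)]
        congr 1
        calc (n-3*a) % (3*a+1) = (n-3*a+(3*a+1)) % (3*a+1) := (Nat.add_mod_right _ _).symm
          _ = (n + 1) % (3*a+1) := by congr 1; omega
          _ = (n % (3*a+1) + 1 % (3*a+1)) % (3*a+1) := Nat.add_mod _ _ _
          _ = (n % (3*a+1) + 1) % (3*a+1) := by
                rw [Nat.mod_eq_of_lt (show 1 < 3*a+1 by omega)]
      obtain ⟨e1, e2, e3⟩ := echar (n % (3*a+1)) hr
      obtain ⟨⟨ne1, ne2, ne3⟩, cov2, cov3⟩ :=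
        gcore_step a b (n % (3*a+1)) ha hb hr _ _ _ e1 e2 e3
      rw [hG n]
      have hmem : ∀ v, (v ∈ {v | ∃ s ∈ ({1, a, 3*a} : Finset ℕ), s ≤ n ∧ v = G (n - s)}) ↔
          ((1 ≤ n ∧ v = gcore a ((n % (3*a+1) + 3*a) % (3*a+1))) ∨
           (a ≤ n ∧ v = gcore a ((n % (3*a+1) + (2*a+1)) % (3*a+1))) ∨
           (3*a ≤ n ∧ v = gcore a ((n % (3*a+1) + 1) % (3*a+1)))) := by
        intro v
        simp only [Set.mem_setOf_eq, Finset.mem_insert, Finset.mem_singleton]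
        constructor
        · rintro ⟨s, (rfl | rfl | rfl), hsn, rfl⟩
          · exact Or.inl ⟨hsn, h1 hsn⟩
          · exact Or.inr (Or.inl ⟨hsn, h2 hsn⟩)
          · exact Or.inr (Or.inr ⟨hsn, h3 hsn⟩)
        · rintro (⟨hn, rfl⟩ | ⟨hn, rfl⟩ | ⟨hn, rfl⟩)
          · exact ⟨1, Or.inl rfl, hn, (h1 hn).symm⟩
          · exact ⟨a, Or.inr (Or.inl rfl), hn, (h2 hn).symm⟩
          · exact ⟨3*a, Or.inr (Or.inr rfl), hn, (h3 hn).symm⟩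
      refine mex_eq'_s12 ?_ ?_
      · rw [hmem]
        rintro (⟨-, h⟩ | ⟨-, h⟩ | ⟨-, h⟩)
        · exact ne1 h
        · exact ne2 h
        · exact ne3 h
      · intro y hy
        rw [hmem]
        rcases le_or_gt (3*a) n with hn | hn
        · rcases cov3 y hy with h | h | h
          · exact Or.inl ⟨by omega, h⟩
          · exact Or.inr (Or.inl ⟨by omega, h⟩)
          · exact Or.inr (Or.inr ⟨hn, h⟩)
        · have hrn : n % (3*a+1) = n := Nat.mod_eq_of_lt (by omega)
          rcases cov2 y hy with ⟨h1', h2'⟩ | ⟨h1', h2'⟩ | ⟨h1', h2'⟩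
          · exact Or.inl ⟨by omega, h2'⟩
          · exact Or.inr (Or.inl ⟨by omega, h2'⟩)
          · exact Or.inr (Or.inr ⟨by omega, h2'⟩)
  have hper : ∀ n, G (n + (3*a+1)) = G n := by
    intro n; rw [key, key, Nat.add_mod_right]
  have hperm : ∀ m n, G (n + m * (3*a+1)) = G n := by
    intro m
    induction m with
    | zero => simp
    | succ m ih =>
      intro n
      have e : n + (m+1) * (3*a+1) = (n + m * (3*a+1)) + (3*a+1) := by ring
      rw [e, hper, ih]
  have hsafe : ∀ s, (s = 1 ∨ s = a ∨ s = 2*a+1 ∨ s = 3*a) → ∀ n, G (n+s) ≠ G n := by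
    intro s hs n
    rw [key, key]
    have hrn : n % (3*a+1) ≤ 3*a := by have := Nat.mod_lt n hP; omega
    have e : (n+s) % (3*a+1) = (n % (3*a+1) + s) % (3*a+1) := by
      rw [Nat.add_mod, Nat.mod_eq_of_lt (show s < 3*a+1 by omega)]
    rw [e]
    obtain ⟨e1, e2, e3⟩ := echar (n % (3*a+1)) hrn
    obtain ⟨⟨ne1, ne2, ne3⟩, -, -⟩ :=
      gcore_step a b (n % (3*a+1)) ha hb hrn _ _ _ e1 e2 e3
    rcases hs with rfl | hs | rfl | rfl
    · exact ne3.symm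
    · -- shift by a : apply step at r' = (r+a) % (3a+1)
      rw [hs]
      have hr' : (n % (3*a+1) + a) % (3*a+1) ≤ 3*a := by
        have := Nat.mod_lt (n % (3*a+1) + a) hP; omega
      obtain ⟨e1', -, e3'⟩ := echar ((n % (3*a+1) + a) % (3*a+1)) hr'
      have hc : (n % (3*a+1) + a < 3*a+1 ∧ (n % (3*a+1) + a) % (3*a+1) = n % (3*a+1) + a) ∨
          (3*a+1 ≤ n % (3*a+1) + a ∧ (n % (3*a+1) + a) % (3*a+1) = n % (3*a+1) + a - (3*a+1)) :=
        mod_cases' (by omega)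
      have e2' : ((n % (3*a+1) + a) % (3*a+1) < a ∧ n % (3*a+1) = (n % (3*a+1) + a) % (3*a+1) + 2*a+1) ∨
          (a ≤ (n % (3*a+1) + a) % (3*a+1) ∧ n % (3*a+1) = (n % (3*a+1) + a) % (3*a+1) - a) := by
        omega
      obtain ⟨⟨-, ne2', -⟩, -, -⟩ :=
        gcore_step a b ((n % (3*a+1) + a) % (3*a+1)) ha hb hr' _ (n % (3*a+1)) _ e1' e2' e3'
      exact ne2'
    · exact ne2.symm
    · exact ne1.symm
  have hex : ∀ d, d ≤ 3*a → ¬(d = 1 ∨ d = a ∨ d = 2*a+1 ∨ d = 3*a) →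
      ∃ r, r ≤ 3*a ∧ gcore a ((r + d) % (3*a+1)) = gcore a r := by
    intro d hd hnd
    have hcases : d = 0 ∨ (2 ≤ d ∧ d < a ∧ d % 2 = 0) ∨ (3 ≤ d ∧ d < a ∧ d % 2 = 1) ∨
        (a+1 ≤ d ∧ d ≤ 2*a ∧ d % 2 = 1) ∨ (a+2 ≤ d ∧ d ≤ 2*a ∧ d % 2 = 0) ∨
        (2*a+2 ≤ d ∧ d ≤ 3*a-1 ∧ d % 2 = 0) ∨ (2*a+3 ≤ d ∧ d ≤ 3*a-1 ∧ d % 2 = 1) := by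
      omega
    rcases hcases with h | h | h | h | h | h | h
    · subst h
      exact ⟨0, by omega, by norm_num⟩
    · refine ⟨0, by omega, ?_⟩
      have e : (0 + d) % (3*a+1) = d := by
        rw [Nat.zero_add]; exact Nat.mod_eq_of_lt (by omega)
      rw [e]
      have v1 : gcore a d = 0 := by have := gcore_spec a d ha (by omega); omega
      have v0 : gcore a 0 = 0 := by have := gcore_spec a 0 ha (by omega); omega
      omega
    · refine ⟨a+1-d, by omega, ?_⟩
      have e : (a+1-d + d) % (3*a+1) = a+1 := by
        rw [show a+1-d+d = a+1 by omega]; exact Nat.mod_eq_of_lt (by omega)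
      rw [e]
      have v1 : gcore a (a+1) = 0 := by have := gcore_spec a (a+1) ha (by omega); omega
      have v0 : gcore a (a+1-d) = 0 := by have := gcore_spec a (a+1-d) ha (by omega); omega
      omega
    · refine ⟨0, by omega, ?_⟩
      have e : (0 + d) % (3*a+1) = d := by
        rw [Nat.zero_add]; exact Nat.mod_eq_of_lt (by omega)
      rw [e]
      have v1 : gcore a d = 0 := by have := gcore_spec a d ha (by omega); omega
      have v0 : gcore a 0 = 0 := by have := gcore_spec a 0 ha (by omega); omega
      omega
    · refine ⟨3*a+1-d, by omega, ?_⟩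
      have e : (3*a+1-d + d) % (3*a+1) = 0 := by
        rw [show 3*a+1-d+d = 3*a+1 by omega]; exact Nat.mod_self _
      rw [e]
      have v1 : gcore a 0 = 0 := by have := gcore_spec a 0 ha (by omega); omega
      have v0 : gcore a (3*a+1-d) = 0 := by have := gcore_spec a (3*a+1-d) ha (by omega); omega
      omega
    · refine ⟨0, by omega, ?_⟩
      have e : (0 + d) % (3*a+1) = d := by
        rw [Nat.zero_add]; exact Nat.mod_eq_of_lt (by omega)
      rw [e]
      have v1 : gcore a d = 0 := by have := gcore_spec a d ha (by omega); omega
      have v0 : gcore a 0 = 0 := by have := gcore_spec a 0 ha (by omega); omega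
      omega
    · refine ⟨3*a+1-d, by omega, ?_⟩
      have e : (3*a+1-d + d) % (3*a+1) = 0 := by
        rw [show 3*a+1-d+d = 3*a+1 by omega]; exact Nat.mod_self _
      rw [e]
      have v1 : gcore a 0 = 0 := by have := gcore_spec a 0 ha (by omega); omega
      have v0 : gcore a (3*a+1-d) = 0 := by have := gcore_spec a (3*a+1-d) ha (by omega); omega
      omega
  refine ⟨hper, ?_, ?_⟩
  · intro n hn
    have hk : G n = gcore a n := by rw [key n, Nat.mod_eq_of_lt hn]
    have s0 := gcore_spec a n ha (by omega)
    rw [hk]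
    exact ⟨fun h => by omega, fun h => by omega, fun h h' => by omega,
      fun h => by omega, fun h h' => by omega, fun h => by omega⟩
  · intro c hc
    constructor
    · intro hall
      refine ⟨c % (3*a+1), c / (3*a+1), ?_, ?_⟩
      · conv_lhs => rw [← Nat.div_add_mod c (3*a+1)]
        ring
      · by_contra hd
        have hdle : c % (3*a+1) ≤ 3*a := by have := Nat.mod_lt c hP; omega
        obtain ⟨r, hrle, hre⟩ := hex (c % (3*a+1)) hdle hd
        apply hall r
        rw [key, key, Nat.mod_eq_of_lt (show r < 3*a+1 by omega), ← Nat.add_mod_mod]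
        exact hre
    · rintro ⟨s, m, rfl, hs⟩ n
      rw [show n + (s + m*(3*a+1)) = n + s + m*(3*a+1) by ring, hperm]
      exact hsafe s hs n
end
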